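/- Let X be a geodesic Peano continuum that is semi-locally simply connected, and (X̃, d) its path space with the length-infimum metric. Then the endpoint projection p: X̃ → X is a covering map and X̃ is simply connected. -/

import Mathlib

/-!
Compactness and semi-local simple connectedness give a uniform scale `ε > 0` below which loops
are null-homotopic. Hence two points of `X̃` over the same point of `X` at distance `< ε`
coincide, and every point `e` close to `b` is `b` extended by the geodesic from `b(1)` to `e(1)`.
So over `ball x (ε / 4)` the space `X̃` is the disjoint union of the sheets of geodesic
extensions of the points of the fiber over `x`, each mapped isometrically onto the ball.

The lift of a path `γ` starting at `[α]` is `t ↦ [α ∗ γ|[0, t]]`; by uniqueness of lifts, every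
path `P` from `a` to `b` in `X̃` satisfies `b = a ∗ [p ∘ P]`. So two paths from `a` to `b` have
homotopic projections, and a covering map is injective on homotopy classes of paths.
-/

open Metric Set ENNReal NNReal

noncomputable section

/-- Arc length of a path in a pseudo-metric space, valued in `ℝ≥0∞`. -/
def pathLen {X : Type*} [PseudoMetricSpace X] {x y : X} (γ : Path x y) : ℝ≥0∞ :=
  eVariationOn γ Set.univ

/-- A metric space is geodesic if any two points are joined by a path whose
length equals their distance. -/
def IsGeodesicSpace (X : Type*) [MetricSpace X] : Prop :=
  ∀ x y : X, ∃ γ : Path x y, pathLen γ = ENNReal.ofReal (dist x y)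

/-- Semi-local simple connectedness: every point has a neighborhood `U` such
that every loop contained in `U` is null-homotopic in `X`. -/
def SemiLocallySimplyConnected (X : Type*) [TopologicalSpace X] : Prop :=
  ∀ x : X, ∃ U ∈ nhds x, ∀ γ : Path x x, Set.range γ ⊆ U → γ.Homotopic (Path.refl x)

/-- A group is finitely presented. -/
def Group.FinitelyPresented (G : Type*) [Group G] : Prop :=
  ∃ (n : ℕ) (rels : Set (FreeGroup (Fin n))), rels.Finite ∧
    Nonempty (PresentedGroup rels ≃* G)

/-- The space of homotopy-rel-endpoints classes of paths starting at `x₀`. -/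
def PathsFrom {X : Type*} [TopologicalSpace X] (x₀ : X) : Type _ :=
  Σ y : X, Path.Homotopic.Quotient x₀ y

/-- The length-infimum distance on `PathsFrom x₀`, valued in `ℝ≥0∞`:
the infimum of lengths of paths `γ` from `α(1)` to `β(1)` such that
`α ∗ γ` is homotopic rel endpoints to `β`. -/
def dTilde {X : Type*} [MetricSpace X] {x₀ : X} (a b : PathsFrom x₀) : ℝ≥0∞ :=
  ⨅ γ : {γ : Path a.1 b.1 // a.2.trans ⟦γ⟧ = b.2}, pathLen γ.1

/-- The endpoint projection `X̃ → X`. -/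
def endpointProj {X : Type*} [TopologicalSpace X] {x₀ : X} (a : PathsFrom x₀) : X := a.1

/-- The action of a class of a loop `β` at `x₀` on `PathsFrom x₀`, sending `[α]` to `[β ∗ α]`. -/
def loopAct {X : Type*} [TopologicalSpace X] {x₀ : X}
    (g : Path.Homotopic.Quotient x₀ x₀) (a : PathsFrom x₀) : PathsFrom x₀ :=
  ⟨a.1, g.trans a.2⟩

/-- Uniform path connectedness. -/
def UniformlyPathConnected (X : Type*) [MetricSpace X] : Prop :=
  ∃ α : ℝ → ℝ, ∀ x y : X, x ≠ y →
    ∃ γ : Path x y, Metric.diam (Set.range γ) ≤ α (dist x y)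

/-- `π₁(X, x₀)` is uniformly generated: for some `R > 0` it is generated by
classes of loops of diameter at most `R`, conjugated to the basepoint by arbitrary paths. -/
def UniformlyGeneratedPi1 (X : Type*) [MetricSpace X] (x₀ : X) : Prop :=
  ∃ R : ℝ, 0 < R ∧ Subgroup.closure
    {g : FundamentalGroup X x₀ | ∃ (y : X) (p : Path x₀ y) (γ : Path y y),
      Metric.diam (Set.range γ) ≤ R ∧
      g = FundamentalGroup.fromPath (X := TopCat.of X) ⟦(p.trans γ).trans p.symm⟧} = ⊤

/-- A list of points of `X` is an `r`-chain: consecutive points are at distance at most `r`. -/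
def IsChain' {X : Type*} [MetricSpace X] (r : ℝ) : List X → Prop :=
  List.Chain' (fun x y => dist x y ≤ r)

/-- An elementary move at scale `R` between based chains: insertion of one interior
point, with both chains being `R`-chains. -/
def ChainMove {X : Type*} [MetricSpace X] (R : ℝ) (l₁ l₂ : List X) : Prop :=
  ∃ (p q : List X) (x : X), p ≠ [] ∧ q ≠ [] ∧
    l₁ = p ++ q ∧ l₂ = p ++ x :: q ∧ IsChain' R l₁ ∧ IsChain' R l₂

/-- A based `r`-loop is `R`-null-homotopic: it can be reduced to the trivial loop
by elementary moves at scale `R`. -/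
def ChainNull {X : Type*} [MetricSpace X] (R : ℝ) (x₀ : X) (l : List X) : Prop :=
  Relation.ReflTransGen (fun a b => ChainMove R a b ∨ ChainMove R b a) l [x₀, x₀]

/-- Coarse 1-connectedness of a metric space, via chains (edge-paths in Rips
complexes): `X` is `t`-chain connected for some `t > 0`, and every `r`-loop can
be filled at some uniformly larger scale `R`. -/
def CoarselySimplyConnected (X : Type*) [MetricSpace X] : Prop :=
  (∃ t : ℝ, 0 < t ∧ ∀ x y : X, ∃ l : List X, IsChain' t l ∧
      l.head? = some x ∧ l.getLast? = some y) ∧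
  ∀ r : ℝ, 0 < r → ∃ R : ℝ, r ≤ R ∧ ∀ (x₀ : X) (l : List X),
    IsChain' r l → l.head? = some x₀ → l.getLast? = some x₀ → ChainNull R x₀ l

end

noncomputable section

open unitInterval

section Geodesic

variable {X : Type*}

theorem edist_le_pathLen [PseudoMetricSpace X] {x y : X} (γ : Path x y) (s t : I) :
    edist (γ s) (γ t) ≤ pathLen γ :=
  eVariationOn.edist_le γ (mem_univ s) (mem_univ t)

theorem range_subset_ball_of_pathLen_lt [PseudoMetricSpace X] {x y : X} (γ : Path x y) {r : ℝ}
    (h : pathLen γ < ENNReal.ofReal r) : range γ ⊆ ball x r := by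
  rintro _ ⟨t, rfl⟩
  have := (edist_le_pathLen γ 0 t).trans_lt h
  rw [γ.source, edist_dist, ENNReal.ofReal_lt_ofReal_iff_of_nonneg dist_nonneg] at this
  rwa [mem_ball, dist_comm]

variable [MetricSpace X]

def geodesic (hg : IsGeodesicSpace X) (x y : X) : Path x y := (hg x y).choose

theorem pathLen_geodesic (hg : IsGeodesicSpace X) (x y : X) :
    pathLen (geodesic hg x y) = ENNReal.ofReal (dist x y) :=
  (hg x y).choose_spec

theorem range_geodesic_subset_ball (hg : IsGeodesicSpace X) {x y : X} {r : ℝ} (h : dist x y < r) :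
    range (geodesic hg x y) ⊆ ball x r :=
  range_subset_ball_of_pathLen_lt _ <| by
    rwa [pathLen_geodesic, ENNReal.ofReal_lt_ofReal_iff_of_nonneg dist_nonneg]

end Geodesic

theorem Path.homotopic_refl_of_conj {X : Type*} [TopologicalSpace X] {x y : X}
    (g : Path x y) (γ : Path y y) (h : ((g.trans γ).trans g.symm).Homotopic (Path.refl x)) :
    γ.Homotopic (Path.refl y) := by
  rw [← Path.Homotopic.Quotient.eq] at h ⊢
  calc Path.Homotopic.Quotient.mk γ
      = ((Path.Homotopic.Quotient.mk g).symm.trans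
          (Path.Homotopic.Quotient.mk ((g.trans γ).trans g.symm))).trans
          (Path.Homotopic.Quotient.mk g) := by
        simp only [Path.Homotopic.Quotient.mk_trans, Path.Homotopic.Quotient.mk_symm,
          Path.Homotopic.Quotient.trans_assoc, Path.Homotopic.Quotient.symm_trans,
          Path.Homotopic.Quotient.trans_refl]
        rw [← Path.Homotopic.Quotient.trans_assoc, Path.Homotopic.Quotient.symm_trans,
          Path.Homotopic.Quotient.refl_trans]
    _ = Path.Homotopic.Quotient.refl y := by rw [h]; simp

/-- Uniform semi-local simple connectedness at scale `ε`. -/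
def SmallLoopsNull (X : Type*) [PseudoMetricSpace X] (ε : ℝ) : Prop :=
  ∀ (y : X) (γ : Path y y), range γ ⊆ ball y ε → γ.Homotopic (Path.refl y)

theorem SmallLoopsNull.homotopic {X : Type*} [PseudoMetricSpace X] {ε : ℝ}
    (hε : SmallLoopsNull X ε) {u v : X} {β β' : Path u v} (hβ : range β ⊆ ball u ε)
    (hβ' : range β' ⊆ ball u ε) : β.Homotopic β' := by
  have h := hε u (β.trans β'.symm) <| by
    rw [Path.trans_range, Path.symm_range]; exact union_subset hβ hβ'
  rw [← Path.Homotopic.Quotient.eq] at h ⊢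
  calc Path.Homotopic.Quotient.mk β
      = (Path.Homotopic.Quotient.mk (β.trans β'.symm)).trans (Path.Homotopic.Quotient.mk β') := by
        simp
    _ = Path.Homotopic.Quotient.mk β' := by rw [h]; simp

/-- For a Lebesgue number `δ` of the cover by balls `ball x (r x)` on which loops at `x` are
null, a loop at `y` in `ball y δ ⊆ ball x (r x)`, conjugated by a geodesic from `x`, is such a
loop at `x`. -/
theorem exists_smallLoopsNull {X : Type*} [MetricSpace X] [CompactSpace X]
    (hg : IsGeodesicSpace X) (hs : SemiLocallySimplyConnected X) :
    ∃ ε > 0, SmallLoopsNull X ε := by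
  choose U hU hnull using hs
  choose r hr hrU using fun x => Metric.mem_nhds_iff.mp (hU x)
  obtain ⟨δ, hδ, hleb⟩ := lebesgue_number_lemma_of_metric isCompact_univ
    (fun x => isOpen_ball (x := x) (ε := r x))
    (fun x _ => mem_iUnion.2 ⟨x, mem_ball_self (hr x)⟩)
  refine ⟨δ, hδ, fun y γ hγ => ?_⟩
  obtain ⟨x, hx⟩ := hleb y (mem_univ y)
  have hgeo := range_geodesic_subset_ball hg (mem_ball'.mp (hx (mem_ball_self hδ)))
  refine (geodesic hg x y).homotopic_refl_of_conj γ (hnull x _ ?_)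
  rw [Path.trans_range, Path.trans_range, Path.symm_range]
  exact (union_subset (union_subset hgeo (hγ.trans hx)) hgeo).trans (hrU x)

namespace PathsFrom

section Extend

variable {X : Type*} [TopologicalSpace X] {x₀ : X}

def extend (e : PathsFrom x₀) {z : X} (γ : Path e.1 z) : PathsFrom x₀ :=
  ⟨z, e.2.trans (.mk γ)⟩

theorem extend_congr (e : PathsFrom x₀) {z z' : X} {γ : Path e.1 z} {γ' : Path e.1 z'}
    (h : ∀ t, γ t = γ' t) : e.extend γ = e.extend γ' := by
  obtain rfl : z = z' := by simpa using h 1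
  obtain rfl : γ = γ' := Path.ext (funext h)
  rfl

theorem extend_refl (e : PathsFrom x₀) : e.extend (Path.refl e.1) = e :=
  Sigma.ext rfl (heq_of_eq (Path.Homotopic.Quotient.trans_refl e.2))

theorem extend_extend (e : PathsFrom x₀) {y z : X} (γ : Path e.1 y) (δ : Path y z) :
    (e.extend γ).extend δ = e.extend (γ.trans δ) :=
  Sigma.ext rfl (heq_of_eq (Path.Homotopic.Quotient.trans_assoc _ _ _))

theorem extend_eq_extend_iff (e : PathsFrom x₀) {z : X} {γ γ' : Path e.1 z} :
    e.extend γ = e.extend γ' ↔ γ.Homotopic γ' := by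
  rw [← Path.Homotopic.Quotient.eq]
  refine ⟨fun h => ?_, fun h => by rw [extend, extend, h]⟩
  have h' := eq_of_heq (Sigma.mk.inj_iff.mp h).2
  calc Path.Homotopic.Quotient.mk γ = e.2.symm.trans (e.2.trans (.mk γ)) := by
        rw [← Path.Homotopic.Quotient.trans_assoc]; simp
    _ = Path.Homotopic.Quotient.mk γ' := by
        rw [h', ← Path.Homotopic.Quotient.trans_assoc]; simp

def liftAlong (e : PathsFrom x₀) {y : X} (γ : Path e.1 y) (t : I) : PathsFrom x₀ :=
  e.extend ((γ.subpath 0 t).cast γ.source.symm rfl)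

variable (e : PathsFrom x₀) {y : X} (γ : Path e.1 y)

theorem liftAlong_zero : liftAlong e γ 0 = e :=
  (extend_congr e (γ' := Path.refl e.1) fun s => by simp [Path.subpath]).trans (extend_refl e)

theorem liftAlong_one : liftAlong e γ 1 = e.extend γ :=
  extend_congr e fun s => by simp [Path.subpath]

theorem liftAlong_eq_extend (t₁ t : I) :
    liftAlong e γ t = (liftAlong e γ t₁).extend (γ.subpath t₁ t) := by
  simp only [liftAlong]
  rw [extend_extend, extend_eq_extend_iff]
  exact ⟨((Path.Homotopy.subpathTransSubpath γ 0 t₁ t).pathCast γ.source.symm rfl).symm⟩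

end Extend

section Metric

variable {X : Type*} [MetricSpace X] {x₀ : X} [MetricSpace (PathsFrom x₀)]
  (hm : ∀ a b : PathsFrom x₀, ENNReal.ofReal (dist a b) = dTilde a b)

def extendGeodesic (hg : IsGeodesicSpace X) (e : PathsFrom x₀) (z : X) : PathsFrom x₀ :=
  e.extend (geodesic hg e.1 z)

include hm

theorem dist_fst_le (a b : PathsFrom x₀) : dist a.1 b.1 ≤ dist a b := by
  have h : ENNReal.ofReal (dist a.1 b.1) ≤ dTilde a b := le_iInf fun γ => by
    simpa [edist_dist] using edist_le_pathLen γ.1 0 1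
  rwa [← hm, ENNReal.ofReal_le_ofReal_iff dist_nonneg] at h

theorem continuous_endpointProj : Continuous (endpointProj (x₀ := x₀)) :=
  (LipschitzWith.mk_one (dist_fst_le hm)).continuous

theorem ofReal_dist_extend_le (e : PathsFrom x₀) {z : X} (γ : Path e.1 z) :
    ENNReal.ofReal (dist e (e.extend γ)) ≤ pathLen γ :=
  (hm _ _).trans_le (iInf_le_of_le ⟨γ, rfl⟩ le_rfl)

theorem dist_extendGeodesic_le (hg : IsGeodesicSpace X) (e : PathsFrom x₀) (z : X) :
    dist e (extendGeodesic hg e z) ≤ dist e.1 z := by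
  have h := ofReal_dist_extend_le hm e (geodesic hg e.1 z)
  rwa [pathLen_geodesic, ENNReal.ofReal_le_ofReal_iff dist_nonneg] at h

theorem exists_extend_eq_of_dist_lt {a b : PathsFrom x₀} {r : ℝ} (h : dist a b < r) :
    ∃ γ : Path a.1 b.1, a.extend γ = b ∧ pathLen γ < ENNReal.ofReal r := by
  rw [← ENNReal.ofReal_lt_ofReal_iff_of_nonneg dist_nonneg, hm] at h
  obtain ⟨⟨γ, hγ⟩, hlt⟩ := iInf_lt_iff.mp h
  exact ⟨γ, congrArg (Sigma.mk b.1) hγ, hlt⟩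

variable {ε : ℝ} (hε : SmallLoopsNull X ε)
include hε

theorem eq_of_fst_eq_of_dist_lt {a b : PathsFrom x₀} (h₁ : a.1 = b.1) (h₂ : dist a b < ε) :
    a = b := by
  obtain ⟨γ, hb, hγ⟩ := exists_extend_eq_of_dist_lt hm h₂
  obtain ⟨y, q⟩ := a
  obtain ⟨y', q'⟩ := b
  dsimp only at h₁ γ hγ hb
  subst h₁
  refine (extend_refl _).symm.trans (Eq.trans ?_ hb)
  exact (extend_eq_extend_iff _).mpr (hε y γ (range_subset_ball_of_pathLen_lt γ hγ)).symm

theorem extendGeodesic_eq_of_dist_lt (hg : IsGeodesicSpace X) {a b : PathsFrom x₀}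
    (h : dist a b < ε / 2) : extendGeodesic hg a b.1 = b := by
  refine eq_of_fst_eq_of_dist_lt hm hε rfl ?_
  calc dist (extendGeodesic hg a b.1) b
      ≤ dist a (extendGeodesic hg a b.1) + dist a b := dist_triangle_left _ _ _
    _ ≤ dist a b + dist a b := by
        gcongr; exact (dist_extendGeodesic_le hm hg a b.1).trans (dist_fst_le hm a b)
    _ < ε := by linarith

theorem dist_le_dist_fst_of_dist_lt (hg : IsGeodesicSpace X) {a b : PathsFrom x₀}
    (h : dist a b < ε / 2) : dist a b ≤ dist a.1 b.1 := by
  conv_lhs => rw [← extendGeodesic_eq_of_dist_lt hm hε hg h]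
  exact dist_extendGeodesic_le hm hg a b.1

theorem dist_extend_le_of_range_subset (hg : IsGeodesicSpace X) (e : PathsFrom x₀) {z : X}
    (γ : Path e.1 z) (hγ : range γ ⊆ ball e.1 ε) : dist e (e.extend γ) ≤ dist e.1 z := by
  have hz : dist e.1 z < ε := mem_ball'.mp (hγ ⟨1, γ.target⟩)
  rw [(extend_eq_extend_iff e).mpr (hε.homotopic hγ (range_geodesic_subset_ball hg hz))]
  exact dist_extendGeodesic_le hm hg e z

theorem continuous_liftAlong (hε₀ : 0 < ε) (hg : IsGeodesicSpace X) (e : PathsFrom x₀) {y : X}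
    (γ : Path e.1 y) : Continuous (liftAlong e γ) := by
  refine Metric.continuous_iff.mpr fun t₁ r hr => ?_
  obtain ⟨η, hη, hγη⟩ := Metric.continuous_iff.mp γ.continuous t₁ (min r ε) (lt_min hr hε₀)
  refine ⟨η, hη, fun t ht => ?_⟩
  have hsub : range (γ.subpath t₁ t) ⊆ ball (γ t₁) ε := by
    rw [Path.range_subpath]
    rintro _ ⟨s, hs, rfl⟩
    have hst : dist s t₁ < η := by
      rw [dist_comm]
      refine lt_of_le_of_lt ?_ (dist_comm t t₁ ▸ ht)
      simp only [Subtype.dist_eq]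
      exact Real.dist_left_le_of_mem_uIcc (by simpa [Set.mem_uIcc] using hs)
    exact mem_ball.mpr ((hγη s hst).trans_le (min_le_right _ _))
  rw [liftAlong_eq_extend e γ t₁ t, dist_comm]
  calc dist (liftAlong e γ t₁) ((liftAlong e γ t₁).extend (γ.subpath t₁ t))
      ≤ dist (γ t₁) (γ t) := dist_extend_le_of_range_subset hm hε hg _ _ hsub
    _ < r := by rw [dist_comm]; exact (hγη t ht).trans_le (min_le_left _ _)

theorem exists_path_lift (hε₀ : 0 < ε) (hg : IsGeodesicSpace X) (e : PathsFrom x₀) {y : X}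
    (γ : Path e.1 y) : ∃ Γ : Path e (e.extend γ), ∀ t, (Γ t).1 = γ t :=
  ⟨⟨⟨liftAlong e γ, continuous_liftAlong hm hε hε₀ hg e γ⟩, liftAlong_zero e γ, liftAlong_one e γ⟩,
    fun _ => rfl⟩

theorem discreteTopology_fiber (hε₀ : 0 < ε) (x : X) :
    DiscreteTopology (endpointProj ⁻¹' {x} : Set (PathsFrom x₀)) :=
  .of_forall_le_dist hε₀ fun a b hab => not_lt.mp fun h =>
    hab (Subtype.ext (eq_of_fst_eq_of_dist_lt hm hε (a.2.trans b.2.symm) h))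

theorem extendGeodesic_eq_extendGeodesic (hg : IsGeodesicSpace X) {a b : PathsFrom x₀} {x : X}
    (ha : dist a.1 x < ε / 4) (hb : dist b.1 x < ε / 4) (hab : dist a b < ε / 2) :
    extendGeodesic hg a x = extendGeodesic hg b x := by
  refine eq_of_fst_eq_of_dist_lt hm hε rfl ?_
  calc _ ≤ dist (extendGeodesic hg a x) a + dist a b + dist b (extendGeodesic hg b x) :=
        dist_triangle4 _ _ _ _
    _ < ε := by
        rw [dist_comm (extendGeodesic hg a x)]
        linarith [dist_extendGeodesic_le hm hg a x, dist_extendGeodesic_le hm hg b x]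

theorem dist_extendGeodesic_extendGeodesic_le (hg : IsGeodesicSpace X) (e : PathsFrom x₀)
    {z z' : X} (hz : dist e.1 z < ε / 4) (hz' : dist e.1 z' < ε / 4) :
    dist (extendGeodesic hg e z) (extendGeodesic hg e z') ≤ dist z z' := by
  refine dist_le_dist_fst_of_dist_lt hm hε hg ?_
  linarith [dist_triangle_left (extendGeodesic hg e z) (extendGeodesic hg e z') e,
    dist_extendGeodesic_le hm hg e z, dist_extendGeodesic_le hm hg e z']

def sheetHomeomorph (hε₀ : 0 < ε) (hg : IsGeodesicSpace X) (x : X) :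
    (endpointProj ⁻¹' ball x (ε / 4) : Set (PathsFrom x₀)) ≃ₜ
      ball x (ε / 4) × (endpointProj ⁻¹' {x} : Set (PathsFrom x₀)) where
  toFun e := (⟨e.1.1, e.2⟩, ⟨extendGeodesic hg e.1 x, rfl⟩)
  invFun zb := ⟨extendGeodesic hg zb.2.1 zb.1, zb.1.2⟩
  left_inv e := by
    have he : dist e.1.1 x < ε / 4 := e.2
    refine Subtype.ext (extendGeodesic_eq_of_dist_lt hm hε hg (b := e.1) ?_)
    exact (dist_comm _ _).trans_lt (by linarith [dist_extendGeodesic_le hm hg e.1 x])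
  right_inv := by
    rintro ⟨z, ⟨⟨y, q⟩, hy⟩⟩
    obtain rfl : y = x := hy
    have hz : dist y z < ε / 4 := mem_ball'.mp z.2
    refine Prod.ext rfl (Subtype.ext (extendGeodesic_eq_of_dist_lt hm hε hg (b := ⟨y, q⟩) ?_))
    exact (dist_comm _ _).trans_lt (by linarith [dist_extendGeodesic_le hm hg ⟨y, q⟩ z])
  continuous_toFun := by
    refine .prodMk (((continuous_endpointProj hm).comp continuous_subtype_val).subtype_mk _)
      (continuous_iff_continuousAt.mpr fun e =>
        (continuousAt_const (y := (⟨extendGeodesic hg e.1 x, rfl⟩ : endpointProj ⁻¹' {x}))).congr ?_)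
    refine Metric.eventually_nhds_iff.mpr ⟨ε / 2, by positivity, fun e' he' => ?_⟩
    exact Subtype.ext (extendGeodesic_eq_extendGeodesic hm hε hg e.2 e'.2
      ((dist_comm _ _).trans_lt he'))
  continuous_invFun := by
    have := discreteTopology_fiber hm hε hε₀ x
    refine continuous_prod_of_discrete_right.mpr fun b => ?_
    refine Continuous.subtype_mk (LipschitzWith.mk_one fun z z' => ?_).continuous _
    obtain ⟨⟨y, q⟩, hy⟩ := b
    obtain rfl : y = x := hy
    exact dist_extendGeodesic_extendGeodesic_le hm hε hg _ (mem_ball'.mp z.2) (mem_ball'.mp z'.2)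

theorem isCoveringMap_endpointProj (hε₀ : 0 < ε) (hg : IsGeodesicSpace X) :
    IsCoveringMap (endpointProj (x₀ := x₀)) := fun x =>
  ⟨discreteTopology_fiber hm hε hε₀ x, ball x (ε / 4), mem_ball_self (by positivity), isOpen_ball,
    isOpen_ball.preimage (continuous_endpointProj hm), sheetHomeomorph hm hε hε₀ hg x,
    fun _ => rfl⟩

theorem eq_extend_map_endpointProj (hε₀ : 0 < ε) (hg : IsGeodesicSpace X) {a b : PathsFrom x₀}
    (P : Path a b) : b = a.extend (P.map (continuous_endpointProj hm)) := by
  obtain ⟨Γ, hΓ⟩ := exists_path_lift hm hε hε₀ hg a (P.map (continuous_endpointProj hm))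
  have hΓP : ⇑Γ = ⇑P := (isCoveringMap_endpointProj hm hε hε₀ hg).eq_of_comp_eq Γ.continuous
    P.continuous (funext hΓ) 0 (Γ.source.trans P.source.symm)
  rw [← Γ.target, hΓP, P.target]

theorem joined_base (hε₀ : 0 < ε) (hg : IsGeodesicSpace X) {y : X}
    (q : Path.Homotopic.Quotient x₀ y) :
    Joined (X := PathsFrom x₀) ⟨x₀, .refl x₀⟩ ⟨y, q⟩ := by
  induction q using Path.Homotopic.Quotient.ind with | mk α
  obtain ⟨Γ, -⟩ := exists_path_lift hm hε hε₀ hg ⟨x₀, .refl x₀⟩ α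
  exact ⟨Γ.cast rfl (congrArg (Sigma.mk y) (Path.Homotopic.Quotient.refl_trans _).symm)⟩

theorem simplyConnectedSpace (hε₀ : 0 < ε) (hg : IsGeodesicSpace X) :
    SimplyConnectedSpace (PathsFrom x₀) := by
  refine simply_connected_iff_paths_homotopic'.mpr
    ⟨⟨⟨⟨x₀, .refl x₀⟩⟩, fun a b => (joined_base hm hε hε₀ hg a.2).symm.trans
      (joined_base hm hε hε₀ hg b.2)⟩, fun {a b} P Q => ?_⟩
  have h := (eq_extend_map_endpointProj hm hε hε₀ hg P).symm.trans
    (eq_extend_map_endpointProj hm hε hε₀ hg Q)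
  rw [extend_eq_extend_iff, ← Path.Homotopic.Quotient.eq] at h
  exact Path.Homotopic.Quotient.eq.mp
    ((isCoveringMap_endpointProj hm hε hε₀ hg).injective_path_homotopic_map a b h)

end Metric

end PathsFrom

end

theorem stmt9_general {X : Type*} [MetricSpace X] [CompactSpace X]
    (hg : IsGeodesicSpace X)
    (hs : SemiLocallySimplyConnected X) (x₀ : X)
    (m : MetricSpace (PathsFrom x₀))
    (hm : ∀ a b : PathsFrom x₀,
      ENNReal.ofReal (letI := m; dist a b) = dTilde a b) :
    letI := m
    IsCoveringMap (endpointProj (x₀ := x₀)) ∧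
    SimplyConnectedSpace (PathsFrom x₀) := by
  obtain ⟨ε, hε₀, hε⟩ := exists_smallLoopsNull hg hs
  exact ⟨PathsFrom.isCoveringMap_endpointProj hm hε hε₀ hg,
    PathsFrom.simplyConnectedSpace hm hε hε₀ hg⟩

/-- the endpoint projection is a covering map and `X̃` is simply
connected. -/
theorem stmt9 {X : Type*} [MetricSpace X] [CompactSpace X] [ConnectedSpace X]
    [LocallyConnectedSpace X] (hg : IsGeodesicSpace X)
    (hs : SemiLocallySimplyConnected X) (x₀ : X)
    (m : MetricSpace (PathsFrom x₀))
    (hm : ∀ a b : PathsFrom x₀,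
      ENNReal.ofReal (letI := m; dist a b) = dTilde a b) :
    letI := m
    IsCoveringMap (endpointProj (x₀ := x₀)) ∧
    SimplyConnectedSpace (PathsFrom x₀) :=
  stmt9_general hg hs x₀ m hm
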